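/- arXiv:1707.00037 — 3 statements merged into one kernel-verified Lean document; each statement's English description precedes it below -/
import Mathlib

section
/- For all real η and all ε > 0, the inequality |η| - η·tanh(η/ε) < 0.2785·ε holds. -/
open Real

lemma exp_taylor_lb : (3.59067 : ℝ) < Real.exp 1.27849 := by
  have h := Real.sum_le_exp_of_nonneg (x := 1.27849) (by norm_num) 9
  refine lt_of_lt_of_le ?_ h
  simp only [Finset.sum_range_succ, Finset.sum_range_zero]
  norm_num [Nat.factorial]

lemma key_ineq (t : ℝ) (ht : 0 ≤ t) : t < 0.2785 * (Real.exp t + 1) := by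
  have hr : (0:ℝ) < 3.59067 := by norm_num
  have h1 : Real.exp t ≥ 3.59067 * (t + 1 - Real.log 3.59067) := by
    have := Real.add_one_le_exp (t - Real.log 3.59067)
    have he : Real.exp (t - Real.log 3.59067) = Real.exp t / 3.59067 := by
      rw [Real.exp_sub, Real.exp_log hr]
    rw [he] at this
    have h := (le_div_iff₀ hr).mp this
    nlinarith [h]
  have h2 : Real.log 3.59067 < 1.27849 :=
    (Real.log_lt_iff_lt_exp hr).mpr exp_taylor_lb
  nlinarith [h1, h2]

lemma abs_sub_tanh (z : ℝ) : |z| - z * Real.tanh z < 0.2785 := by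
  wlog hz : 0 ≤ z with H
  · have := H (-z) (by linarith [le_of_not_ge hz])
    simpa [Real.tanh_neg, abs_neg] using this
  rw [abs_of_nonneg hz, Real.tanh_eq_sinh_div_cosh]
  have hc : 0 < Real.cosh z := Real.cosh_pos z
  rw [Real.cosh_eq, Real.sinh_eq] at *
  have hne : Real.exp z + Real.exp (-z) > 0 := by positivity
  have hkey := key_ineq (2 * z) (by linarith)
  have he2 : Real.exp (2 * z) = Real.exp z * Real.exp z := by
    rw [← Real.exp_add]; ring_nf
  have hee : Real.exp z * Real.exp (-z) = 1 := by
    rw [← Real.exp_add]; simp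
  rw [he2] at hkey
  have h3 : z - z * ((Real.exp z - Real.exp (-z)) / 2 / ((Real.exp z + Real.exp (-z)) / 2))
      = 2 * z * Real.exp (-z) / (Real.exp z + Real.exp (-z)) := by
    field_simp
    ring
  rw [h3, div_lt_iff₀ hne]
  nlinarith [Real.exp_pos z, Real.exp_pos (-z)]

theorem scalar_tanh_bound (η ε : ℝ) (hε : 0 < ε) :
    |η| - η * Real.tanh (η / ε) < 0.2785 * ε := by
  have h := abs_sub_tanh (η / ε)
  have hεne : ε ≠ 0 := ne_of_gt hε
  have := mul_lt_mul_of_pos_left h hε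
  calc |η| - η * Real.tanh (η / ε)
      = ε * (|η / ε| - η / ε * Real.tanh (η / ε)) := by
        rw [abs_div, abs_of_pos hε]; field_simp
    _ < ε * 0.2785 := this
    _ = 0.2785 * ε := by ring
end

section
/- For any vector y ∈ ℝ^n and any β > 0, the inequality -yᵀ · tanh(β·y) ≤ -‖y‖₁ + 0.2785·n/β holds, where tanh is applied componentwise. -/
/-!
Since `1 - tanh u = 2 / (exp (2u) + 1)`, the scalar quantity `|a| - a tanh (β a)` equals
`(1/β) · t / (exp t + 1)` with `t = 2β|a|`, and `t / (exp t + 1)` is at most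
`W(1/e) ≈ 0.27846` (the maximum sits at `t ≈ 1.2785`). Summing over the coordinates gives
the bound.
-/

open Real

lemma exp_1_2784_ge : (3.5907 : ℝ) ≤ exp 1.2784 := by
  have he : (2.7182818283 : ℝ) < exp 1 := exp_one_gt_d9
  have hsum := sum_le_exp_of_nonneg (show (0 : ℝ) ≤ 0.2784 by norm_num) 8
  norm_num [Finset.sum_range_succ, Nat.factorial] at hsum
  rw [show (1.2784 : ℝ) = 1 + 0.2784 by norm_num, exp_add]
  nlinarith [exp_pos (0.2784 : ℝ)]

/-- `exp` lies above its tangent line at `1.2784`, whose slope `exp 1.2784` is just above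
`1 / 0.2785`. -/
theorem le_mul_exp_add_one (t : ℝ) : t ≤ 0.2785 * (exp t + 1) := by
  have htangent : exp 1.2784 * (t - 1.2784 + 1) ≤ exp t := by
    calc exp 1.2784 * (t - 1.2784 + 1) ≤ exp 1.2784 * exp (t - 1.2784) := by
          gcongr; exact add_one_le_exp _
      _ = exp t := by rw [← exp_add]; ring_nf
  have hslope := exp_1_2784_ge
  rcases le_or_gt (t - 1.2784 + 1) 0 with ht | ht
  · nlinarith [exp_pos t]
  · nlinarith

theorem one_sub_tanh_eq (u : ℝ) : 1 - tanh u = 2 / (exp (2 * u) + 1) := by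
  have hcosh : exp (2 * u) + 1 = 2 * exp u * cosh u := by
    rw [cosh_eq, two_mul, exp_add, exp_neg]
    field_simp
  rw [hcosh, tanh_eq_sinh_div_cosh, sinh_eq, cosh_eq, exp_neg]
  field_simp
  ring

theorem mul_one_sub_tanh_le (u : ℝ) : u * (1 - tanh u) ≤ 0.2785 := by
  rw [one_sub_tanh_eq, mul_div_assoc', div_le_iff₀ (by positivity)]
  linarith [le_mul_exp_add_one (2 * u)]

theorem mul_tanh_mul_self_eq_abs (a β : ℝ) : a * tanh (β * a) = |a| * tanh (β * |a|) := by
  rcases abs_cases a with ⟨ha, _⟩ | ⟨ha, _⟩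
  · rw [ha]
  · rw [ha, mul_neg, tanh_neg, neg_mul_neg]

theorem abs_sub_mul_tanh_le (a : ℝ) {β : ℝ} (hβ : 0 < β) :
    |a| - a * tanh (β * a) ≤ 0.2785 / β := by
  rw [mul_tanh_mul_self_eq_abs, le_div_iff₀ hβ]
  calc (|a| - |a| * tanh (β * |a|)) * β = β * |a| * (1 - tanh (β * |a|)) := by ring
    _ ≤ 0.2785 := mul_one_sub_tanh_le _

theorem vector_tanh_bound (n : ℕ) (y : Fin n → ℝ) (β : ℝ) (hβ : 0 < β) :
    -(∑ i, y i * Real.tanh (β * y i)) ≤ -(∑ i, |y i|) + 0.2785 * n / β := by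
  have hsum : ∑ i, (|y i| - y i * tanh (β * y i)) ≤ ∑ _i : Fin n, 0.2785 / β :=
    Finset.sum_le_sum fun i _ => abs_sub_mul_tanh_le (y i) hβ
  rw [Finset.sum_sub_distrib, Finset.sum_const, Finset.card_univ, Fintype.card_fin,
    nsmul_eq_mul] at hsum
  have hrhs : (n : ℝ) * (0.2785 / β) = 0.2785 * n / β := by ring
  linarith
end

section
/- Let f : ℝ → ℝ be strictly convex and differentiable with minimizer x_f on {x : g(x) < 0}, and for τ > 0 let x_τ minimize F_τ(x) = f(x) - (α/τ)·ln(-g(x)) over {x : g(x) < 0}, where g is convex differentiable and α > 0. Then f(x_τ) - f(x*) ≤ α/τ, where x* minimizes f subject to g(x) ≤ 0. In particular, as τ → ∞, f(x_τ) → f(x*). -/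
/-!
The barrier minimizer `z` is a stationary point of `f - c log(-g)`, i.e. of the Lagrangian
`f + μ g` with multiplier `μ = c / (-g z) ≥ 0`. Being convex, the Lagrangian is then globally
minimized at `z`, so for every feasible `y` we get `f z - c = f z + μ g z ≤ f y + μ g y ≤ f y`:
the duality gap is exactly `c = α / τ`.
-/

open Filter Set

noncomputable def barrierObjective (f g : ℝ → ℝ) (c x : ℝ) : ℝ :=
  f x - c * Real.log (-g x)

theorem hasDerivAt_barrierObjective {f g : ℝ → ℝ} {f' g' c z : ℝ} (hf : HasDerivAt f f' z)
    (hg : HasDerivAt g g' z) (hz : g z < 0) :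
    HasDerivAt (barrierObjective f g c) (f' + c / -g z * g') z := by
  have hlog : HasDerivAt (fun x => Real.log (-g x)) (-g' / -g z) z :=
    hg.neg.log (neg_ne_zero.mpr hz.ne)
  exact (hf.sub (hlog.const_mul c)).congr_deriv (by ring)

theorem ConvexOn.isMinOn_of_hasDerivAt_eq_zero {S : Set ℝ} {f : ℝ → ℝ} {x : ℝ}
    (hf : ConvexOn ℝ S f) (hx : x ∈ interior S) (hf' : HasDerivAt f 0 x) : IsMinOn f S x :=
  hf.isMinOn_of_rightDeriv_eq_zero hx
    (hf'.hasDerivWithinAt.derivWithin (uniqueDiffWithinAt_Ioi x))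

theorem ConvexOn.add_mul_le_of_stationary {S : Set ℝ} {f g : ℝ → ℝ} {f' g' μ z y : ℝ}
    (hf : ConvexOn ℝ S f) (hg : ConvexOn ℝ S g) (hμ : 0 ≤ μ) (hz : z ∈ interior S)
    (hf' : HasDerivAt f f' z) (hg' : HasDerivAt g g' z) (hstat : f' + μ * g' = 0)
    (hy : y ∈ S) (hgy : g y ≤ 0) :
    f z + μ * g z ≤ f y := by
  have hL : HasDerivAt (fun x => f x + μ * g x) 0 z := hstat ▸ hf'.add (hg'.const_mul μ)
  have hmin := (hf.add (hg.smul hμ)).isMinOn_of_hasDerivAt_eq_zero hz hL hy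
  simp only [Pi.add_apply, smul_eq_mul, mem_ofPred_eq] at hmin
  linarith [mul_nonpos_of_nonneg_of_nonpos hμ hgy]

theorem sub_le_of_isMinOn_barrierObjective {f g : ℝ → ℝ} {c z y : ℝ}
    (hf : ConvexOn ℝ univ f) (hg : ConvexOn ℝ univ g)
    (hfd : DifferentiableAt ℝ f z) (hgd : DifferentiableAt ℝ g z) (hc : 0 ≤ c) (hz : g z < 0)
    (hmin : IsMinOn (barrierObjective f g c) {x | g x < 0} z) (hgy : g y ≤ 0) :
    f z - f y ≤ c := by
  have hlocal : IsLocalMin (barrierObjective f g c) z :=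
    hmin.isLocalMin (hgd.continuousAt.eventually_lt continuousAt_const hz)
  have hstat : deriv f z + c / -g z * deriv g z = 0 :=
    hlocal.hasDerivAt_eq_zero (hasDerivAt_barrierObjective hfd.hasDerivAt hgd.hasDerivAt hz)
  have hdual := hf.add_mul_le_of_stationary hg (div_nonneg hc (by linarith)) (by simp)
    hfd.hasDerivAt hgd.hasDerivAt hstat (mem_univ y) hgy
  have hgap : c / -g z * g z = -c := by field_simp [hz.ne]
  linarith

theorem barrier_suboptimality_general (f g : ℝ → ℝ) (α : ℝ) (hα : 0 < α)
    (hf : StrictConvexOn ℝ Set.univ f) (hfd : Differentiable ℝ f)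
    (hg : ConvexOn ℝ Set.univ g) (hgd : Differentiable ℝ g)
    (xs : ℝ) (hxs_feas : g xs ≤ 0) (hxs_opt : ∀ x, g x ≤ 0 → f xs ≤ f x)
    (xτ : ℝ → ℝ)
    (hxτ : ∀ τ : ℝ, 0 < τ → g (xτ τ) < 0 ∧
      ∀ x, g x < 0 →
        f (xτ τ) - (α / τ) * Real.log (-(g (xτ τ))) ≤
          f x - (α / τ) * Real.log (-(g x))) :
    (∀ τ : ℝ, 0 < τ → f (xτ τ) - f xs ≤ α / τ) ∧
    Tendsto (fun τ => f (xτ τ)) atTop (nhds (f xs)) := by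
  have hbound : ∀ τ : ℝ, 0 < τ → f (xτ τ) - f xs ≤ α / τ := fun τ hτ =>
    sub_le_of_isMinOn_barrierObjective hf.convexOn hg (hfd _) (hgd _) (div_pos hα hτ).le
      (hxτ τ hτ).1 (isMinOn_iff.mpr (hxτ τ hτ).2) hxs_feas
  refine ⟨hbound, ?_⟩
  have hupper : Tendsto (fun τ => f xs + α / τ) atTop (nhds (f xs)) := by
    simpa using tendsto_const_nhds.add (tendsto_const_nhds.div_atTop (tendsto_id (α := ℝ)))
  refine tendsto_of_tendsto_of_tendsto_of_le_of_le' tendsto_const_nhds hupper ?_ ?_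
  · filter_upwards [eventually_gt_atTop 0] with τ hτ using hxs_opt _ (hxτ τ hτ).1.le
  · filter_upwards [eventually_gt_atTop 0] with τ hτ using by linarith [hbound τ hτ]

/-- Interior-point suboptimality bound: if `x* ` minimizes `f` subject to
`g ≤ 0` and `x_τ` minimizes the barrier objective
`f(x) - (α/τ)·ln(-g(x))` over `{g < 0}`, then `f(x_τ) - f(x*) ≤ α/τ`; in
particular `f(x_τ) → f(x*)` as `τ → ∞`. -/
theorem barrier_suboptimality (f g : ℝ → ℝ) (α : ℝ) (hα : 0 < α)
    (hf : StrictConvexOn ℝ Set.univ f) (hfd : Differentiable ℝ f)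
    (hg : ConvexOn ℝ Set.univ g) (hgd : Differentiable ℝ g)
    (hslater : ∃ x : ℝ, g x < 0)
    (xs : ℝ) (hxs_feas : g xs ≤ 0) (hxs_opt : ∀ x, g x ≤ 0 → f xs ≤ f x)
    (xτ : ℝ → ℝ)
    (hxτ : ∀ τ : ℝ, 0 < τ → g (xτ τ) < 0 ∧
      ∀ x, g x < 0 →
        f (xτ τ) - (α / τ) * Real.log (-(g (xτ τ))) ≤
          f x - (α / τ) * Real.log (-(g x))) :
    (∀ τ : ℝ, 0 < τ → f (xτ τ) - f xs ≤ α / τ) ∧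
    Tendsto (fun τ => f (xτ τ)) atTop (nhds (f xs)) :=
  barrier_suboptimality_general f g α hα hf hfd hg hgd xs hxs_feas hxs_opt xτ hxτ
end
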